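/- Suppose there exist η ∈ [0,1), symmetric positive definite n×n matrices P1, P2 and symmetric positive semidefinite matrices Q (q×q), R (p×p) such that for all (x,u,w) ∈ ℝ^n × 𝕌 × 𝕎, with A, B, C, D the Jacobians of f and h evaluated at (x,u,w) and P₊ := P(f(x,u,w)): (a) the block matrix [[AᵀP₊A − ηP(x) − CᵀRC, AᵀP₊B − CᵀRD], [BᵀP₊A − DᵀRC, BᵀP₊B − Q − DᵀRD]] is negative semidefinite, and (b) P1 ⪯ P(x) ⪯ P2. Then the system admits a quadratically bounded exponential δ-IOSS Lyapunov function: there exists W : ℝ^n × ℝ^n → ℝ such that ‖x − x̃‖_{P1}² ≤ W(x,x̃) ≤ ‖x − x̃‖_{P2}² for all x, x̃ ∈ ℝ^n, and W(f(x,u,w), f(x̃,u,w̃)) ≤ η·W(x,x̃) + ‖w − w̃‖_Q² + ‖h(x,u,w) − h(x̃,u,w̃)‖_R² for all (x,u,w), (x̃,u,w̃) ∈ ℝ^n × 𝕌 × 𝕎. (Theorem 2, stated on the full state space ℝ^n.) -/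

import Mathlib

open Matrix

/-- Quadratic form `‖v‖_S² = vᵀ S v` associated with a square matrix `S`. -/
noncomputable def quadNorm {ι : Type*} [Fintype ι] (S : Matrix ι ι ℝ) (v : ι → ℝ) : ℝ :=
  v ⬝ᵥ S.mulVec v

/-- The continuous linear map `(δx, δw) ↦ A δx + B δw` given by a pair of matrices. -/
noncomputable def pairMulCLM {ι κ ν : Type*} [Fintype ι] [Fintype κ] [Fintype ν]
    [DecidableEq ι] [DecidableEq ν]
    (A : Matrix κ ι ℝ) (B : Matrix κ ν ℝ) :
    ((ι → ℝ) × (ν → ℝ)) →L[ℝ] (κ → ℝ) :=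
  (LinearMap.toContinuousLinearMap A.mulVecLin).comp
      (ContinuousLinearMap.fst ℝ (ι → ℝ) (ν → ℝ))
    + (LinearMap.toContinuousLinearMap B.mulVecLin).comp
      (ContinuousLinearMap.snd ℝ (ι → ℝ) (ν → ℝ))

lemma pairMulCLM_apply {ι κ ν : Type*} [Fintype ι] [Fintype κ] [Fintype ν]
    [DecidableEq ι] [DecidableEq ν]
    (A : Matrix κ ι ℝ) (B : Matrix κ ν ℝ) (a : ι → ℝ) (b : ν → ℝ) :
    pairMulCLM A B (a, b) = A *ᵥ a + B *ᵥ b := rfl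

lemma quadNorm_nonneg {ι : Type*} [Fintype ι] {S : Matrix ι ι ℝ} (hS : S.PosSemidef)
    (v : ι → ℝ) : 0 ≤ quadNorm S v := by
  have := hS.dotProduct_mulVec_nonneg v
  simpa [quadNorm] using this

lemma quadNorm_mono {ι : Type*} [Fintype ι] {S T : Matrix ι ι ℝ} (h : (T - S).PosSemidef)
    (v : ι → ℝ) : quadNorm S v ≤ quadNorm T v := by
  have := quadNorm_nonneg h v
  simp only [quadNorm, Matrix.sub_mulVec, dotProduct_sub] at this ⊢
  linarith

lemma dot_tmul {ι κ ν : Type*} [Fintype ι] [Fintype κ] [Fintype ν]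
    (M : Matrix κ ι ℝ) (N : Matrix κ ν ℝ) (a : ι → ℝ) (b : ν → ℝ) :
    a ⬝ᵥ (Mᵀ * N) *ᵥ b = (M *ᵥ a) ⬝ᵥ (N *ᵥ b) := by
  rw [← Matrix.mulVec_mulVec, Matrix.dotProduct_mulVec a, Matrix.vecMul_transpose]

lemma quadNorm_conj {ι κ : Type*} [Fintype ι] [Fintype κ]
    (M : Matrix κ ι ℝ) (N : Matrix κ κ ℝ) (v : ι → ℝ) :
    quadNorm (Mᵀ * N * M) v = quadNorm N (M *ᵥ v) := by
  rw [quadNorm, Matrix.mul_assoc, dot_tmul, ← Matrix.mulVec_mulVec]; rfl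

lemma quadNorm_blocks {ι κ : Type*} [Fintype ι] [Fintype κ]
    (M : Matrix ι ι ℝ) (N : Matrix κ κ ℝ) (v : ι ⊕ κ → ℝ) :
    quadNorm (Matrix.fromBlocks M 0 0 N) v
      = quadNorm M (fun i => v (Sum.inl i)) + quadNorm N (fun i => v (Sum.inr i)) := by
  have hv : v = Sum.elim (fun i => v (Sum.inl i)) (fun i => v (Sum.inr i)) := by
    funext idx; cases idx <;> rfl
  rw [quadNorm]
  conv_lhs => rw [hv]
  rw [Matrix.fromBlocks_mulVec]
  have : (Sum.elim (fun i => v (Sum.inl i)) (fun i => v (Sum.inr i)) : ι ⊕ κ → ℝ)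
      = (fun i => v (Sum.inl i)) ⊕ᵥ (fun i => v (Sum.inr i)) := rfl
  rw [this, sumElim_dotProduct_sumElim]
  simp [quadNorm, Sum.elim_comp_inl, Sum.elim_comp_inr]

lemma quad_fromBlocks {ι κ : Type*} [Fintype ι] [Fintype κ]
    (M11 : Matrix ι ι ℝ) (M12 : Matrix ι κ ℝ) (M21 : Matrix κ ι ℝ) (M22 : Matrix κ κ ℝ)
    (a : ι → ℝ) (b : κ → ℝ) :
    (Sum.elim a b) ⬝ᵥ (Matrix.fromBlocks M11 M12 M21 M22) *ᵥ (Sum.elim a b)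
      = a ⬝ᵥ M11 *ᵥ a + a ⬝ᵥ M12 *ᵥ b + b ⬝ᵥ M21 *ᵥ a + b ⬝ᵥ M22 *ᵥ b := by
  rw [Matrix.fromBlocks_mulVec]
  have : (Sum.elim a b : ι ⊕ κ → ℝ) = a ⊕ᵥ b := rfl
  rw [this, sumElim_dotProduct_sumElim]
  simp only [Sum.elim_comp_inl, Sum.elim_comp_inr, dotProduct_add]
  ring

lemma sq_integral_le {g : ℝ → ℝ} (hg : Continuous g) :
    (∫ s in (0:ℝ)..1, g s) ^ 2 ≤ ∫ s in (0:ℝ)..1, (g s) ^ 2 := by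
  set a := ∫ s in (0:ℝ)..1, g s with ha
  have h1 : IntervalIntegrable g MeasureTheory.volume 0 1 := hg.intervalIntegrable 0 1
  have h2 : IntervalIntegrable (fun s => (g s)^2) MeasureTheory.volume 0 1 :=
    (hg.pow 2).intervalIntegrable 0 1
  have h0 : (0:ℝ) ≤ ∫ s in (0:ℝ)..1, (g s - a)^2 :=
    intervalIntegral.integral_nonneg (by norm_num) (fun s _ => sq_nonneg _)
  have hexp : ∀ s, (g s - a)^2 = (g s)^2 - (2*a) * g s + a^2 := by intro s; ring
  rw [intervalIntegral.integral_congr (fun s _ => hexp s)] at h0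
  rw [intervalIntegral.integral_add (h2.sub (h1.const_mul _)) intervalIntegrable_const,
    intervalIntegral.integral_sub h2 (h1.const_mul _),
    intervalIntegral.integral_const_mul] at h0
  simp only [intervalIntegral.integral_const, smul_eq_mul] at h0
  nlinarith [h0]

/-- Energy lower bound (Cauchy–Schwarz + FTC). -/
lemma energy_lower {ι : Type*} [Fintype ι] {S : Matrix ι ι ℝ} (hS : S.PosSemidef)
    {c : ℝ → ι → ℝ} (hc : ContDiff ℝ 1 c) :
    quadNorm S (c 1 - c 0) ≤ ∫ s in (0:ℝ)..1, quadNorm S (deriv c s) := by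
  classical
  open scoped MatrixOrder in obtain ⟨B, hB⟩ := CStarAlgebra.nonneg_iff_eq_star_mul_self.mp hS.nonneg
  have hBt : S = Bᵀ * B := by simpa [Matrix.star_eq_conjTranspose] using hB
  have hquad : ∀ v : ι → ℝ, quadNorm S v = ∑ i, ((B *ᵥ v) i)^2 := by
    intro v
    rw [quadNorm, hBt, ← Matrix.mulVec_mulVec, Matrix.dotProduct_mulVec v,
      Matrix.vecMul_transpose]
    simp [dotProduct, sq]
  have hcd : Differentiable ℝ c := hc.differentiable one_ne_zero
  have hderivcont : Continuous (deriv c) := hc.continuous_deriv le_rfl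
  have hgd : ∀ i, ∀ s : ℝ, HasDerivAt (fun t => (B *ᵥ (c t)) i) ((B *ᵥ (deriv c s)) i) s := by
    intro i s
    have hcs : HasDerivAt c (deriv c s) s := (hcd s).hasDerivAt
    have : ∀ j : ι, HasDerivAt (fun t => c t j) ((deriv c s) j) s := hasDerivAt_pi.mp hcs
    have := HasDerivAt.sum (u := (Finset.univ : Finset ι))
      (fun j _ => ((this j).const_mul (B i j)))
    simpa [Matrix.mulVec, dotProduct, Finset.sum_fn] using this
  have hcontBi : ∀ i, Continuous (fun s => (B *ᵥ (deriv c s)) i) := by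
    intro i
    simp only [Matrix.mulVec, dotProduct]
    exact continuous_finset_sum _ fun j _ =>
      continuous_const.mul ((continuous_apply j).comp hderivcont)
  have hftc : ∀ i, (∫ s in (0:ℝ)..1, (B *ᵥ (deriv c s)) i) = (B *ᵥ (c 1 - c 0)) i := by
    intro i
    rw [intervalIntegral.integral_eq_sub_of_hasDerivAt (fun s _ => hgd i s)
      ((hcontBi i).intervalIntegrable 0 1)]
    simp [Matrix.mulVec_sub]
  calc quadNorm S (c 1 - c 0) = ∑ i, ((B *ᵥ (c 1 - c 0)) i)^2 := hquad _
    _ = ∑ i, (∫ s in (0:ℝ)..1, (B *ᵥ (deriv c s)) i)^2 := by simp [hftc]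
    _ ≤ ∑ i, ∫ s in (0:ℝ)..1, ((B *ᵥ (deriv c s)) i)^2 :=
        Finset.sum_le_sum fun i _ => sq_integral_le (hcontBi i)
    _ = ∫ s in (0:ℝ)..1, ∑ i, ((B *ᵥ (deriv c s)) i)^2 := by
        rw [intervalIntegral.integral_finset_sum]
        exact fun i _ => (((hcontBi i).pow 2).intervalIntegrable 0 1)
    _ = ∫ s in (0:ℝ)..1, quadNorm S (deriv c s) := by simp [hquad]

lemma continuous_quadNorm_comp {ι : Type*} [Fintype ι] {S : ℝ → Matrix ι ι ℝ}
    {v : ℝ → ι → ℝ} (hS : ∀ i j, Continuous fun s => S s i j)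
    (hv : ∀ i, Continuous fun s => v s i) :
    Continuous fun s => quadNorm (S s) (v s) := by
  simp only [quadNorm, dotProduct, Matrix.mulVec]
  exact continuous_finset_sum _ fun i _ => (hv i).mul <|
    continuous_finset_sum _ fun j _ => (hS i j).mul (hv j)

/-- Pointwise consequence of the LMI: the differential supply rate inequality. -/
lemma lmi_quad {n q p : Type*} [Fintype n] [Fintype q] [Fintype p]
    (A : Matrix n n ℝ) (Bm : Matrix n q ℝ) (Cm : Matrix p n ℝ) (Dm : Matrix p q ℝ)
    (Pp Px : Matrix n n ℝ) (Q : Matrix q q ℝ) (R : Matrix p p ℝ) (η : ℝ)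
    (a : n → ℝ) (b : q → ℝ)
    (hv : (Sum.elim a b) ⬝ᵥ (Matrix.fromBlocks
        (Aᵀ * Pp * A - η • Px - Cmᵀ * R * Cm) (Aᵀ * Pp * Bm - Cmᵀ * R * Dm)
        (Bmᵀ * Pp * A - Dmᵀ * R * Cm) (Bmᵀ * Pp * Bm - Q - Dmᵀ * R * Dm)) *ᵥ
        (Sum.elim a b) ≤ 0) :
    quadNorm Pp (A *ᵥ a + Bm *ᵥ b)
      ≤ η * quadNorm Px a + quadNorm Q b + quadNorm R (Cm *ᵥ a + Dm *ᵥ b) := by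
  rw [quad_fromBlocks] at hv
  simp only [Matrix.sub_mulVec, dotProduct_sub, Matrix.smul_mulVec,
    dotProduct_smul, smul_eq_mul] at hv
  have e1 : a ⬝ᵥ (Aᵀ * Pp * A) *ᵥ a = (A *ᵥ a) ⬝ᵥ Pp *ᵥ (A *ᵥ a) := by
    rw [Matrix.mul_assoc, dot_tmul, ← Matrix.mulVec_mulVec]
  have e2 : a ⬝ᵥ (Aᵀ * Pp * Bm) *ᵥ b = (A *ᵥ a) ⬝ᵥ Pp *ᵥ (Bm *ᵥ b) := by
    rw [Matrix.mul_assoc, dot_tmul, ← Matrix.mulVec_mulVec]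
  have e3 : b ⬝ᵥ (Bmᵀ * Pp * A) *ᵥ a = (Bm *ᵥ b) ⬝ᵥ Pp *ᵥ (A *ᵥ a) := by
    rw [Matrix.mul_assoc, dot_tmul, ← Matrix.mulVec_mulVec]
  have e4 : b ⬝ᵥ (Bmᵀ * Pp * Bm) *ᵥ b = (Bm *ᵥ b) ⬝ᵥ Pp *ᵥ (Bm *ᵥ b) := by
    rw [Matrix.mul_assoc, dot_tmul, ← Matrix.mulVec_mulVec]
  have e5 : a ⬝ᵥ (Cmᵀ * R * Cm) *ᵥ a = (Cm *ᵥ a) ⬝ᵥ R *ᵥ (Cm *ᵥ a) := by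
    rw [Matrix.mul_assoc, dot_tmul, ← Matrix.mulVec_mulVec]
  have e6 : a ⬝ᵥ (Cmᵀ * R * Dm) *ᵥ b = (Cm *ᵥ a) ⬝ᵥ R *ᵥ (Dm *ᵥ b) := by
    rw [Matrix.mul_assoc, dot_tmul, ← Matrix.mulVec_mulVec]
  have e7 : b ⬝ᵥ (Dmᵀ * R * Cm) *ᵥ a = (Dm *ᵥ b) ⬝ᵥ R *ᵥ (Cm *ᵥ a) := by
    rw [Matrix.mul_assoc, dot_tmul, ← Matrix.mulVec_mulVec]
  have e8 : b ⬝ᵥ (Dmᵀ * R * Dm) *ᵥ b = (Dm *ᵥ b) ⬝ᵥ R *ᵥ (Dm *ᵥ b) := by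
    rw [Matrix.mul_assoc, dot_tmul, ← Matrix.mulVec_mulVec]
  rw [e1, e2, e3, e4, e5, e6, e7, e8] at hv
  simp only [quadNorm, Matrix.mulVec_add, dotProduct_add, add_dotProduct]
  linarith

/-- Theorem 2: existence of a quadratically bounded exponential δ-IOSS
Lyapunov function from differential dynamics, stated on the full state space `ℝ^n` with
`n = k + p` (state index `Fin k ⊕ Fin p`, the output depending affinely only on the last
`p` transformed coordinates). -/
theorem dIOSS_Lyapunov_function_from_differential_dynamics
    {k p m q : ℕ} (hp : 1 ≤ p)
    (f : ((Fin k ⊕ Fin p) → ℝ) → (Fin m → ℝ) → (Fin q → ℝ) → ((Fin k ⊕ Fin p) → ℝ))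
    (h : ((Fin k ⊕ Fin p) → ℝ) → (Fin m → ℝ) → (Fin q → ℝ) → (Fin p → ℝ))
    (U : Set (Fin m → ℝ)) (Wset : Set (Fin q → ℝ)) (hWconv : Convex ℝ Wset)
    -- f and h are continuously differentiable in (x, w) for each fixed input, with Jacobians
    (hfC1 : ∀ u, ContDiff ℝ 1 (fun pr : ((Fin k ⊕ Fin p) → ℝ) × (Fin q → ℝ) => f pr.1 u pr.2))
    (hhC1 : ∀ u, ContDiff ℝ 1 (fun pr : ((Fin k ⊕ Fin p) → ℝ) × (Fin q → ℝ) => h pr.1 u pr.2))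
    (A : ((Fin k ⊕ Fin p) → ℝ) → (Fin m → ℝ) → (Fin q → ℝ)
      → Matrix (Fin k ⊕ Fin p) (Fin k ⊕ Fin p) ℝ)
    (B : ((Fin k ⊕ Fin p) → ℝ) → (Fin m → ℝ) → (Fin q → ℝ)
      → Matrix (Fin k ⊕ Fin p) (Fin q) ℝ)
    (C : ((Fin k ⊕ Fin p) → ℝ) → (Fin m → ℝ) → (Fin q → ℝ)
      → Matrix (Fin p) (Fin k ⊕ Fin p) ℝ)
    (D : ((Fin k ⊕ Fin p) → ℝ) → (Fin m → ℝ) → (Fin q → ℝ)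
      → Matrix (Fin p) (Fin q) ℝ)
    (hJacf : ∀ x u w,
      HasFDerivAt (fun pr : ((Fin k ⊕ Fin p) → ℝ) × (Fin q → ℝ) => f pr.1 u pr.2)
        (pairMulCLM (A x u w) (B x u w)) (x, w))
    (hJach : ∀ x u w,
      HasFDerivAt (fun pr : ((Fin k ⊕ Fin p) → ℝ) × (Fin q → ℝ) => h pr.1 u pr.2)
        (pairMulCLM (C x u w) (D x u w)) (x, w))
    -- φ is a smooth diffeomorphism with Jacobian Dφ
    (φ φinv : ((Fin k ⊕ Fin p) → ℝ) → ((Fin k ⊕ Fin p) → ℝ))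
    (hφ : ContDiff ℝ (⊤ : ℕ∞) φ) (hφinv : ContDiff ℝ (⊤ : ℕ∞) φinv)
    (hφleft : Function.LeftInverse φinv φ) (hφright : Function.RightInverse φinv φ)
    (Dφ : ((Fin k ⊕ Fin p) → ℝ) → Matrix (Fin k ⊕ Fin p) (Fin k ⊕ Fin p) ℝ)
    (hJacφ : ∀ x, HasFDerivAt φ (LinearMap.toContinuousLinearMap (Dφ x).mulVecLin) x)
    -- the transformed output map is affine in (x̄, w) and depends only on x̄_y
    (Cb : (Fin m → ℝ) → Matrix (Fin p) (Fin p) ℝ)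
    (Db : (Fin m → ℝ) → Matrix (Fin p) (Fin q) ℝ)
    (eb : (Fin m → ℝ) → (Fin p → ℝ))
    (htransf : ∀ xb u w, h (φinv xb) u w
      = (Cb u).mulVec (fun i => xb (Sum.inr i)) + (Db u).mulVec w + eb u)
    -- the metric: P̄ = blockdiag(P̄x(x̄_x), P̄y), P(x) = Dφ(x)ᵀ P̄(φ(x)) Dφ(x)
    (Pbx : (Fin k → ℝ) → Matrix (Fin k) (Fin k) ℝ)
    (hPbxsmooth : ∀ i j, ContDiff ℝ (⊤ : ℕ∞) (fun v => Pbx v i j))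
    (hPbxsymm : ∀ v, (Pbx v).IsSymm)
    (Pby : Matrix (Fin p) (Fin p) ℝ) (hPbysymm : Pby.IsSymm)
    (P : ((Fin k ⊕ Fin p) → ℝ) → Matrix (Fin k ⊕ Fin p) (Fin k ⊕ Fin p) ℝ)
    (hPdef : ∀ x, P x = (Dφ x)ᵀ
      * Matrix.fromBlocks (Pbx (fun i => φ x (Sum.inl i))) 0 0 Pby * Dφ x)
    -- constants and LMI conditions
    (η : ℝ) (hη0 : 0 ≤ η) (hη1 : η < 1)
    (P1 P2 : Matrix (Fin k ⊕ Fin p) (Fin k ⊕ Fin p) ℝ) (hP1 : P1.PosDef) (hP2 : P2.PosDef)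
    (Q : Matrix (Fin q) (Fin q) ℝ) (hQ : Q.PosSemidef)
    (R : Matrix (Fin p) (Fin p) ℝ) (hR : R.PosSemidef)
    (hLMI : ∀ x u w, u ∈ U → w ∈ Wset →
      ∀ v : ((Fin k ⊕ Fin p) ⊕ Fin q) → ℝ,
        v ⬝ᵥ (Matrix.fromBlocks
          ((A x u w)ᵀ * P (f x u w) * A x u w - η • P x - (C x u w)ᵀ * R * C x u w)
          ((A x u w)ᵀ * P (f x u w) * B x u w - (C x u w)ᵀ * R * D x u w)
          ((B x u w)ᵀ * P (f x u w) * A x u w - (D x u w)ᵀ * R * C x u w)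
          ((B x u w)ᵀ * P (f x u w) * B x u w - Q - (D x u w)ᵀ * R * D x u w)).mulVec v ≤ 0)
    (hsandwich : ∀ x, (P x - P1).PosSemidef ∧ (P2 - P x).PosSemidef) :
    ∃ W : ((Fin k ⊕ Fin p) → ℝ) → ((Fin k ⊕ Fin p) → ℝ) → ℝ,
      (∀ x xt, quadNorm P1 (x - xt) ≤ W x xt ∧ W x xt ≤ quadNorm P2 (x - xt)) ∧
      (∀ x xt u w wt, u ∈ U → w ∈ Wset → wt ∈ Wset →
        W (f x u w) (f xt u wt) ≤ η * W x xt + quadNorm Q (w - wt)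
          + quadNorm R (h x u w - h xt u wt)) := by
  classical
  set Pbar : ((Fin k ⊕ Fin p) → ℝ) → Matrix (Fin k ⊕ Fin p) (Fin k ⊕ Fin p) ℝ :=
    fun z => Matrix.fromBlocks (Pbx (fun i => z (Sum.inl i))) 0 0 Pby with hPbarDef
  set Eng : (ℝ → ((Fin k ⊕ Fin p) → ℝ)) → ℝ :=
    fun ζ => ∫ s in (0:ℝ)..1, quadNorm (Pbar (ζ s)) (deriv ζ s) with hEngDef
  set CC : ((Fin k ⊕ Fin p) → ℝ) → ((Fin k ⊕ Fin p) → ℝ)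
      → Set (ℝ → ((Fin k ⊕ Fin p) → ℝ)) :=
    fun z0 z1 => {ζ | ContDiff ℝ 1 ζ ∧ ζ 0 = z0 ∧ ζ 1 = z1} with hCCdef
  -- continuity of Pbar entries along a continuous curve
  have hcontPbar : ∀ (c : ℝ → ((Fin k ⊕ Fin p) → ℝ)), Continuous c →
      ∀ i j, Continuous fun s => Pbar (c s) i j := by
    intro c hc i j
    rcases i with i|i <;> rcases j with j|j <;>
      simp only [hPbarDef, Matrix.fromBlocks_apply₁₁, Matrix.fromBlocks_apply₁₂,
        Matrix.fromBlocks_apply₂₁, Matrix.fromBlocks_apply₂₂, Matrix.zero_apply]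
    · exact (hPbxsmooth i j).continuous.comp
        (continuous_pi fun l => (continuous_apply (Sum.inl l)).comp hc)
    · exact continuous_const
    · exact continuous_const
    · exact continuous_const
  have hcontInt : ∀ (ζ : ℝ → ((Fin k ⊕ Fin p) → ℝ)), ContDiff ℝ 1 ζ →
      Continuous fun s => quadNorm (Pbar (ζ s)) (deriv ζ s) := fun ζ hζ =>
    continuous_quadNorm_comp (hcontPbar ζ hζ.continuous)
      (fun i => (continuous_apply i).comp (hζ.continuous_deriv le_rfl))
  -- chain rule through φ
  have hchainφ : ∀ (c : ℝ → ((Fin k ⊕ Fin p) → ℝ)) (v : (Fin k ⊕ Fin p) → ℝ) (s : ℝ),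
      HasDerivAt c v s → HasDerivAt (fun t => φ (c t)) ((Dφ (c s)) *ᵥ v) s := by
    intro c v s hc
    exact (hJacφ (c s)).comp_hasDerivAt s hc
  have hquadP : ∀ (x : (Fin k ⊕ Fin p) → ℝ) (v : (Fin k ⊕ Fin p) → ℝ),
      quadNorm (P x) v = quadNorm (Pbar (φ x)) ((Dφ x) *ᵥ v) := by
    intro x v
    rw [hPdef x]
    exact quadNorm_conj _ _ v
  have hPxlow : ∀ x v, quadNorm P1 v ≤ quadNorm (P x) v :=
    fun x v => quadNorm_mono (hsandwich x).1 v
  have hPxhigh : ∀ x v, quadNorm (P x) v ≤ quadNorm P2 v :=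
    fun x v => quadNorm_mono (hsandwich x).2 v
  -- lower bound on the energy of any admissible curve
  have hlowerEng : ∀ (x xt : (Fin k ⊕ Fin p) → ℝ) (ζ : ℝ → ((Fin k ⊕ Fin p) → ℝ)),
      ζ ∈ CC (φ xt) (φ x) → quadNorm P1 (x - xt) ≤ Eng ζ := by
    intro x xt ζ hζmem
    obtain ⟨hζ, hζ0, hζ1⟩ := hζmem
    set γ : ℝ → ((Fin k ⊕ Fin p) → ℝ) := fun s => φinv (ζ s) with hγdef
    have hγ : ContDiff ℝ 1 γ := (hφinv.of_le (by simp)).comp hζ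
    have hγs : ∀ s, φ (γ s) = ζ s := fun s => hφright (ζ s)
    have hφγ : (fun t => φ (γ t)) = ζ := funext hγs
    have hkey : ∀ s, quadNorm (Pbar (ζ s)) (deriv ζ s) = quadNorm (P (γ s)) (deriv γ s) := by
      intro s
      have hds : HasDerivAt γ (deriv γ s) s := (hγ.differentiable one_ne_zero s).hasDerivAt
      have h5 : HasDerivAt ζ ((Dφ (γ s)) *ᵥ deriv γ s) s := hφγ ▸ hchainφ γ _ s hds
      rw [h5.deriv, hquadP (γ s) (deriv γ s), hγs s]
    have hcont1 : Continuous fun s => quadNorm (Pbar (ζ s)) (deriv ζ s) := hcontInt ζ hζ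
    have hcont2 : Continuous fun s => quadNorm P1 (deriv γ s) :=
      continuous_quadNorm_comp (fun i j => continuous_const)
        (fun i => (continuous_apply i).comp (hγ.continuous_deriv le_rfl))
    have hends : γ 1 - γ 0 = x - xt := by
      simp only [hγdef, hζ0, hζ1, hφleft x, hφleft xt]
    calc quadNorm P1 (x - xt) = quadNorm P1 (γ 1 - γ 0) := by rw [hends]
      _ ≤ ∫ s in (0:ℝ)..1, quadNorm P1 (deriv γ s) := energy_lower hP1.posSemidef hγ
      _ ≤ ∫ s in (0:ℝ)..1, quadNorm (Pbar (ζ s)) (deriv ζ s) := by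
          refine intervalIntegral.integral_mono_on (by norm_num)
            (hcont2.intervalIntegrable 0 1) (hcont1.intervalIntegrable 0 1) ?_
          intro s _
          rw [hkey s]
          exact hPxlow _ _
      _ = Eng ζ := rfl
  have hbdd : ∀ (x xt : (Fin k ⊕ Fin p) → ℝ), BddBelow (Eng '' CC (φ xt) (φ x)) := by
    intro x xt
    exact ⟨quadNorm P1 (x - xt), by rintro T ⟨ζ, hζ, rfl⟩; exact hlowerEng x xt ζ hζ⟩
  -- the straight line (in original coordinates), transported by φ
  have hlineC : ∀ (x xt : (Fin k ⊕ Fin p) → ℝ),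
      ContDiff ℝ 1 (fun s : ℝ => xt + s • (x - xt)) :=
    fun x xt => contDiff_const.add (contDiff_id.smul contDiff_const)
  have hlined : ∀ (x xt : (Fin k ⊕ Fin p) → ℝ) (s : ℝ),
      HasDerivAt (fun t : ℝ => xt + t • (x - xt)) (x - xt) s := by
    intro x xt s
    simpa using ((hasDerivAt_id s).smul_const (x - xt)).const_add xt
  have hlineMem : ∀ (x xt : (Fin k ⊕ Fin p) → ℝ),
      (fun s : ℝ => φ (xt + s • (x - xt))) ∈ CC (φ xt) (φ x) := by
    intro x xt
    refine ⟨(hφ.of_le (by simp)).comp (hlineC x xt), by simp, by simp⟩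
  have hne : ∀ (x xt : (Fin k ⊕ Fin p) → ℝ), (Eng '' CC (φ xt) (φ x)).Nonempty :=
    fun x xt => ⟨_, ⟨_, hlineMem x xt, rfl⟩⟩
  have hupper : ∀ (x xt : (Fin k ⊕ Fin p) → ℝ),
      Eng (fun s : ℝ => φ (xt + s • (x - xt))) ≤ quadNorm P2 (x - xt) := by
    intro x xt
    have hζl : ContDiff ℝ 1 (fun s : ℝ => φ (xt + s • (x - xt))) :=
      (hφ.of_le (by simp)).comp (hlineC x xt)
    have hkey : ∀ s : ℝ, quadNorm (Pbar (φ (xt + s • (x - xt))))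
        (deriv (fun t : ℝ => φ (xt + t • (x - xt))) s)
        = quadNorm (P (xt + s • (x - xt))) (x - xt) := by
      intro s
      have h5 := hchainφ (fun t : ℝ => xt + t • (x - xt)) (x - xt) s (hlined x xt s)
      rw [h5.deriv, hquadP]
    calc Eng (fun s : ℝ => φ (xt + s • (x - xt)))
        ≤ ∫ s in (0:ℝ)..1, quadNorm P2 (x - xt) := by
          refine intervalIntegral.integral_mono_on (by norm_num)
            ((hcontInt _ hζl).intervalIntegrable 0 1)
            (continuous_const.intervalIntegrable 0 1) ?_
          intro s _
          rw [hkey s]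
          exact hPxhigh _ _
      _ = quadNorm P2 (x - xt) := by simp
  -- Pby is positive semidefinite
  have hPbyPSD : Pby.PosSemidef := by
    have hinj : Function.Injective ((Dφ 0).mulVecLin) := by
      have hinvd : HasFDerivAt φinv (fderiv ℝ φinv (φ 0)) (φ 0) :=
        (hφinv.differentiable (by simp) (φ 0)).hasFDerivAt
      have hcomp := hinvd.comp (0 : (Fin k ⊕ Fin p) → ℝ) (hJacφ 0)
      have hidd : HasFDerivAt (φinv ∘ φ)
          (ContinuousLinearMap.id ℝ ((Fin k ⊕ Fin p) → ℝ)) 0 := by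
        rw [show φinv ∘ φ = id from funext hφleft]
        exact hasFDerivAt_id 0
      have heq := hcomp.unique hidd
      intro a b hab
      have h1 : ∀ v, fderiv ℝ φinv (φ 0) ((Dφ 0).mulVecLin v) = v := by
        intro v
        have := congrFun (congrArg (fun (L : ((Fin k ⊕ Fin p) → ℝ) →L[ℝ] _) =>
          (L : ((Fin k ⊕ Fin p) → ℝ) → _)) heq) v
        simpa using this
      rw [← h1 a, ← h1 b, hab]
    have hsurj : Function.Surjective ((Dφ 0).mulVecLin) :=
      LinearMap.injective_iff_surjective.mp hinj
    have hy : ∀ yb : Fin p → ℝ, 0 ≤ quadNorm Pby yb := by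
      intro yb
      obtain ⟨v, hv⟩ := hsurj (Sum.elim (0 : Fin k → ℝ) yb)
      have h0 : 0 ≤ quadNorm (P 0) v :=
        le_trans (quadNorm_nonneg hP1.posSemidef v) (quadNorm_mono (hsandwich 0).1 v)
      rw [hquadP] at h0
      rw [show (Dφ 0) *ᵥ v = Sum.elim (0 : Fin k → ℝ) yb from hv] at h0
      have hb : quadNorm (Pbar (φ 0)) (Sum.elim (0 : Fin k → ℝ) yb)
          = quadNorm (Pbx (fun i => φ 0 (Sum.inl i)))
              (fun i => Sum.elim (0 : Fin k → ℝ) yb (Sum.inl i))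
            + quadNorm Pby (fun i => Sum.elim (0 : Fin k → ℝ) yb (Sum.inr i)) :=
        quadNorm_blocks _ _ _
      rw [hb] at h0
      have hzero : quadNorm (Pbx (fun i => φ 0 (Sum.inl i)))
          (fun i => Sum.elim (0 : Fin k → ℝ) yb (Sum.inl i)) = 0 := by
        simp [quadNorm, dotProduct]
      rw [hzero, zero_add] at h0
      exact h0
    refine Matrix.PosSemidef.of_dotProduct_mulVec_nonneg ?_ fun x => by simpa [quadNorm] using hy x
    rw [Matrix.IsHermitian, Matrix.conjTranspose_eq_transpose_of_trivial]
    exact hPbysymm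
  refine ⟨fun x xt => sInf (Eng '' CC (φ xt) (φ x)), ?_, ?_⟩
  · intro x xt
    constructor
    · exact le_csInf (hne x xt) (by rintro T ⟨ζ, hζ, rfl⟩; exact hlowerEng x xt ζ hζ)
    · exact le_trans (csInf_le (hbdd x xt) ⟨_, hlineMem x xt, rfl⟩) (hupper x xt)
  · intro x xt u w wt hu hw hwt
    set Δw : Fin q → ℝ := w - wt with hΔwdef
    set Δy : Fin p → ℝ := fun i => φ x (Sum.inr i) - φ xt (Sum.inr i) with hΔydef
    set K : Fin p → ℝ := Cb u *ᵥ Δy + Db u *ᵥ Δw with hKdef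
    have hΔh : h x u w - h xt u wt = K := by
      have e1 : h x u w = (Cb u) *ᵥ (fun i => φ x (Sum.inr i)) + (Db u) *ᵥ w + eb u := by
        conv_lhs => rw [← hφleft x]
        exact htransf (φ x) u w
      have e2 : h xt u wt = (Cb u) *ᵥ (fun i => φ xt (Sum.inr i)) + (Db u) *ᵥ wt + eb u := by
        conv_lhs => rw [← hφleft xt]
        exact htransf (φ xt) u wt
      rw [e1, e2, hKdef]
      funext i
      simp [Matrix.mulVec, dotProduct, hΔydef, hΔwdef, mul_sub,
        Finset.sum_sub_distrib]
      ring
    set wc : ℝ → (Fin q → ℝ) := fun s => wt + s • Δw with hwcdef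
    have hwcC : ContDiff ℝ 1 wc := contDiff_const.add (contDiff_id.smul contDiff_const)
    have hwcd : ∀ s : ℝ, HasDerivAt wc Δw s := by
      intro s
      simpa [hwcdef] using ((hasDerivAt_id s).smul_const Δw).const_add wt
    have hwcmem : ∀ s ∈ Set.Icc (0:ℝ) 1, wc s ∈ Wset := by
      intro s hs
      have hrepr : wc s = (1 - s) • wt + s • w := by
        funext i
        simp [hwcdef, hΔwdef]
        ring
      rw [hrepr]
      exact hWconv hwt hw (by linarith [hs.2]) hs.1 (by ring)
    have hmain : ∀ T ∈ Eng '' CC (φ xt) (φ x),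
        sInf (Eng '' CC (φ (f xt u wt)) (φ (f x u w)))
          ≤ η * T + quadNorm Q Δw + quadNorm R K := by
      rintro T ⟨ζ, ⟨hζ, hζ0, hζ1⟩, rfl⟩
      set Δy' : Fin p → ℝ := fun i => ζ 1 (Sum.inr i) - ζ 0 (Sum.inr i) with hΔy'def
      have hΔy'eq : Δy' = Δy := by
        funext i
        simp [hΔy'def, hΔydef, hζ0, hζ1]
      set ζh : ℝ → ((Fin k ⊕ Fin p) → ℝ) := fun s => Sum.elim
        (fun i => ζ s (Sum.inl i))
        (fun i => ζ 0 (Sum.inr i) + s * (ζ 1 (Sum.inr i) - ζ 0 (Sum.inr i))) with hζhdef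
      set dζh : ℝ → ((Fin k ⊕ Fin p) → ℝ) := fun s => Sum.elim
        (fun i => deriv ζ s (Sum.inl i)) Δy' with hdζhdef
      have hζd : ∀ s, HasDerivAt ζ (deriv ζ s) s :=
        fun s => (hζ.differentiable one_ne_zero s).hasDerivAt
      have hζh : ContDiff ℝ 1 ζh := by
        apply contDiff_pi.mpr
        rintro (i|i)
        · exact contDiff_pi.mp hζ (Sum.inl i)
        · exact contDiff_const.add (contDiff_id.mul contDiff_const)
      have hζhd : ∀ s, HasDerivAt ζh (dζh s) s := by
        intro s
        apply hasDerivAt_pi.mpr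
        rintro (i|i)
        · exact hasDerivAt_pi.mp (hζd s) (Sum.inl i)
        · exact ((hasDerivAt_mul_const _).const_add _)
      have hζh0 : ζh 0 = φ xt := by
        funext j
        rcases j with i|i <;> simp [hζhdef, hζ0]
      have hζh1 : ζh 1 = φ x := by
        funext j
        rcases j with i|i <;> simp [hζhdef, hζ0, hζ1]
      -- energy comparison Eng ζh ≤ Eng ζ
      have hix : Continuous fun s =>
          quadNorm (Pbx (fun i => ζ s (Sum.inl i))) (fun i => deriv ζ s (Sum.inl i)) :=
        continuous_quadNorm_comp
          (fun i j => (hPbxsmooth i j).continuous.comp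
            (continuous_pi fun l => (continuous_apply (Sum.inl l)).comp hζ.continuous))
          (fun i => (continuous_apply (Sum.inl i)).comp (hζ.continuous_deriv le_rfl))
      have hiy : Continuous fun s => quadNorm Pby (fun i => deriv ζ s (Sum.inr i)) :=
        continuous_quadNorm_comp (fun i j => continuous_const)
          (fun i => (continuous_apply (Sum.inr i)).comp (hζ.continuous_deriv le_rfl))
      have hEngζ_eq : Eng ζ = (∫ s in (0:ℝ)..1,
            quadNorm (Pbx (fun i => ζ s (Sum.inl i))) (fun i => deriv ζ s (Sum.inl i)))
          + ∫ s in (0:ℝ)..1, quadNorm Pby (fun i => deriv ζ s (Sum.inr i)) := by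
        have hpt1 : (fun s : ℝ => quadNorm (Pbar (ζ s)) (deriv ζ s))
            = fun s : ℝ => quadNorm (Pbx (fun i => ζ s (Sum.inl i)))
                (fun i => deriv ζ s (Sum.inl i))
              + quadNorm Pby (fun i => deriv ζ s (Sum.inr i)) :=
          funext fun s => quadNorm_blocks _ _ _
        show (∫ s in (0:ℝ)..1, quadNorm (Pbar (ζ s)) (deriv ζ s)) = _
        rw [hpt1]
        exact intervalIntegral.integral_add (hix.intervalIntegrable 0 1)
          (hiy.intervalIntegrable 0 1)
      have hEngζh_eq : Eng ζh = (∫ s in (0:ℝ)..1,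
            quadNorm (Pbx (fun i => ζ s (Sum.inl i))) (fun i => deriv ζ s (Sum.inl i)))
          + quadNorm Pby Δy' := by
        have hpt2 : (fun s : ℝ => quadNorm (Pbar (ζh s)) (deriv ζh s))
            = fun s : ℝ => quadNorm (Pbx (fun i => ζ s (Sum.inl i)))
                (fun i => deriv ζ s (Sum.inl i))
              + quadNorm Pby Δy' := by
          funext s
          rw [(hζhd s).deriv]
          exact quadNorm_blocks _ _ _
        show (∫ s in (0:ℝ)..1, quadNorm (Pbar (ζh s)) (deriv ζh s)) = _
        rw [hpt2, intervalIntegral.integral_add (hix.intervalIntegrable 0 1)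
          intervalIntegrable_const]
        simp
      have hycurve : quadNorm Pby Δy'
          ≤ ∫ s in (0:ℝ)..1, quadNorm Pby (fun i => deriv ζ s (Sum.inr i)) := by
        set cy : ℝ → (Fin p → ℝ) := fun s => fun i => ζ s (Sum.inr i) with hcydef
        have hcy : ContDiff ℝ 1 cy := contDiff_pi.mpr fun i => contDiff_pi.mp hζ (Sum.inr i)
        have hcyd : ∀ s, HasDerivAt cy (fun i => deriv ζ s (Sum.inr i)) s := by
          intro s
          exact hasDerivAt_pi.mpr fun i => hasDerivAt_pi.mp (hζd s) (Sum.inr i)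
        have h1 := energy_lower hPbyPSD hcy
        have h2 : cy 1 - cy 0 = Δy' := rfl
        rw [h2] at h1
        refine le_trans h1 (le_of_eq ?_)
        exact intervalIntegral.integral_congr fun s _ => by rw [(hcyd s).deriv]
      have hEngζh : Eng ζh ≤ Eng ζ := by
        rw [hEngζ_eq, hEngζh_eq]
        linarith
      -- transported curve
      set γh : ℝ → ((Fin k ⊕ Fin p) → ℝ) := fun s => φinv (ζh s) with hγhdef
      have hγh : ContDiff ℝ 1 γh := (hφinv.of_le (by simp)).comp hζh
      have hφγh : ∀ s, φ (γh s) = ζh s := fun s => hφright (ζh s)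
      set g : ℝ → ((Fin k ⊕ Fin p) → ℝ) := fun s => f (γh s) u (wc s) with hgdef
      have hgC : ContDiff ℝ 1 g := (hfC1 u).comp (hγh.prodMk hwcC)
      set δ : ℝ → ((Fin k ⊕ Fin p) → ℝ) := fun s => φ (g s) with hδdef
      have hδC : ContDiff ℝ 1 δ := (hφ.of_le (by simp)).comp hgC
      have hγh0 : γh 0 = xt := by
        simp only [hγhdef]
        rw [hζh0]
        exact hφleft xt
      have hγh1 : γh 1 = x := by
        simp only [hγhdef]
        rw [hζh1]
        exact hφleft x
      have hwc0 : wc 0 = wt := by simp [hwcdef]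
      have hwc1 : wc 1 = w := by
        funext i
        simp [hwcdef, hΔwdef]
      have hδ0 : δ 0 = φ (f xt u wt) := by
        simp only [hδdef, hgdef, hγh0, hwc0]
      have hδ1 : δ 1 = φ (f x u w) := by
        simp only [hδdef, hgdef, hγh1, hwc1]
      have hδmem : Eng δ ∈ Eng '' CC (φ (f xt u wt)) (φ (f x u w)) :=
        ⟨δ, ⟨hδC, hδ0, hδ1⟩, rfl⟩
      -- pointwise estimate
      have hpt : ∀ s ∈ Set.Icc (0:ℝ) 1, quadNorm (Pbar (δ s)) (deriv δ s)
          ≤ η * quadNorm (Pbar (ζh s)) (dζh s) + quadNorm Q Δw + quadNorm R K := by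
        intro s hs
        have has : HasDerivAt γh (deriv γh s) s := (hγh.differentiable one_ne_zero s).hasDerivAt
        set a : (Fin k ⊕ Fin p) → ℝ := deriv γh s with hadefn
        have hpair : HasDerivAt (fun t => (γh t, wc t)) (a, Δw) s := has.prodMk (hwcd s)
        have hgd : HasDerivAt g
            ((A (γh s) u (wc s)) *ᵥ a + (B (γh s) u (wc s)) *ᵥ Δw) s :=
          by have := (hJacf (γh s) u (wc s)).comp_hasDerivAt s hpair; exact this
        have hδd : HasDerivAt δ
            ((Dφ (g s)) *ᵥ ((A (γh s) u (wc s)) *ᵥ a + (B (γh s) u (wc s)) *ᵥ Δw)) s :=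
          hchainφ g _ s hgd
        rw [hδd.deriv]
        have hL : quadNorm (Pbar (δ s))
            ((Dφ (g s)) *ᵥ ((A (γh s) u (wc s)) *ᵥ a + (B (γh s) u (wc s)) *ᵥ Δw))
            = quadNorm (P (g s)) ((A (γh s) u (wc s)) *ᵥ a + (B (γh s) u (wc s)) *ᵥ Δw) :=
          (hquadP (g s) _).symm
        rw [hL]
        have hlmi := hLMI (γh s) u (wc s) hu (hwcmem s hs) (Sum.elim a Δw)
        have hkey := lmi_quad (A (γh s) u (wc s)) (B (γh s) u (wc s))
          (C (γh s) u (wc s)) (D (γh s) u (wc s))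
          (P (f (γh s) u (wc s))) (P (γh s)) Q R η a Δw hlmi
        have h6 : HasDerivAt (fun t => φ (γh t)) ((Dφ (γh s)) *ᵥ a) s := hchainφ γh a s has
        have h7 : (fun t => φ (γh t)) = ζh := funext hφγh
        rw [h7] at h6
        have h8 : (Dφ (γh s)) *ᵥ a = dζh s := h6.unique (hζhd s)
        have h9 : quadNorm (P (γh s)) a = quadNorm (Pbar (ζh s)) (dζh s) := by
          rw [hquadP, hφγh s, h8]
        have h10 : HasDerivAt (fun t => h (γh t) u (wc t))
            ((C (γh s) u (wc s)) *ᵥ a + (D (γh s) u (wc s)) *ᵥ Δw) s :=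
          by have := (hJach (γh s) u (wc s)).comp_hasDerivAt s hpair; exact this
        set K' : Fin p → ℝ := Cb u *ᵥ Δy' + Db u *ᵥ Δw with hK'def
        have h11 : (fun t => h (γh t) u (wc t))
            = fun t : ℝ => (Cb u *ᵥ (fun i => ζ 0 (Sum.inr i)) + Db u *ᵥ wt + eb u)
              + t • K' := by
          funext t
          have e3 : h (γh t) u (wc t)
              = Cb u *ᵥ (fun i => ζh t (Sum.inr i)) + Db u *ᵥ wc t + eb u := by
            simp only [hγhdef]
            exact htransf (ζh t) u (wc t)
          rw [e3]
          show Cb u *ᵥ ((fun i => ζ 0 (Sum.inr i)) + t • Δy') + Db u *ᵥ (wt + t • Δw)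
            + eb u = _
          rw [Matrix.mulVec_add, Matrix.mulVec_smul, Matrix.mulVec_add, Matrix.mulVec_smul,
            hK'def, smul_add]
          abel
        rw [h11] at h10
        have h12 : HasDerivAt (fun t : ℝ =>
            (Cb u *ᵥ (fun i => ζ 0 (Sum.inr i)) + Db u *ᵥ wt + eb u) + t • K') K' s := by
          simpa using ((hasDerivAt_id s).smul_const K').const_add
            (Cb u *ᵥ (fun i => ζ 0 (Sum.inr i)) + Db u *ᵥ wt + eb u)
        have h13 : (C (γh s) u (wc s)) *ᵥ a + (D (γh s) u (wc s)) *ᵥ Δw = K' :=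
          h10.unique h12
        have hK'K : K' = K := by rw [hK'def, hΔy'eq, hKdef]
        rw [h9, h13, hK'K] at hkey
        exact hkey
      -- integrate
      have hcδ : Continuous fun s => quadNorm (Pbar (δ s)) (deriv δ s) := hcontInt δ hδC
      have hcζh : Continuous fun s => quadNorm (Pbar (ζh s)) (dζh s) := by
        have heq : (fun s => quadNorm (Pbar (ζh s)) (dζh s))
            = fun s => quadNorm (Pbar (ζh s)) (deriv ζh s) := by
          funext s
          rw [(hζhd s).deriv]
        rw [heq]
        exact hcontInt ζh hζh
      have hEngζh_eq2 : Eng ζh = ∫ s in (0:ℝ)..1, quadNorm (Pbar (ζh s)) (dζh s) := by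
        show (∫ s in (0:ℝ)..1, quadNorm (Pbar (ζh s)) (deriv ζh s)) = _
        exact intervalIntegral.integral_congr fun s _ => by rw [(hζhd s).deriv]
      have hint : Eng δ ≤ η * Eng ζh + quadNorm Q Δw + quadNorm R K := by
        rw [hEngζh_eq2]
        show (∫ s in (0:ℝ)..1, quadNorm (Pbar (δ s)) (deriv δ s)) ≤ _
        calc (∫ s in (0:ℝ)..1, quadNorm (Pbar (δ s)) (deriv δ s))
            ≤ ∫ s in (0:ℝ)..1, (η * quadNorm (Pbar (ζh s)) (dζh s)
              + quadNorm Q Δw + quadNorm R K) := by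
              refine intervalIntegral.integral_mono_on (by norm_num)
                (hcδ.intervalIntegrable 0 1)
                ((((continuous_const.mul hcζh).add continuous_const).add
                  continuous_const).intervalIntegrable 0 1) hpt
          _ = η * (∫ s in (0:ℝ)..1, quadNorm (Pbar (ζh s)) (dζh s))
              + quadNorm Q Δw + quadNorm R K := by
              rw [intervalIntegral.integral_add
                (f := fun s => η * quadNorm (Pbar (ζh s)) (dζh s) + quadNorm Q Δw)
                (((continuous_const.mul hcζh).add continuous_const).intervalIntegrable 0 1)
                (continuous_const.intervalIntegrable 0 1),
                intervalIntegral.integral_add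
                (f := fun s => η * quadNorm (Pbar (ζh s)) (dζh s))
                ((continuous_const.mul hcζh).intervalIntegrable 0 1)
                (continuous_const.intervalIntegrable 0 1),
                intervalIntegral.integral_const_mul]
              simp
      calc sInf (Eng '' CC (φ (f xt u wt)) (φ (f x u w))) ≤ Eng δ :=
            csInf_le (hbdd (f x u w) (f xt u wt)) hδmem
        _ ≤ η * Eng ζh + quadNorm Q Δw + quadNorm R K := hint
        _ ≤ η * Eng ζ + quadNorm Q Δw + quadNorm R K := by
            have := mul_le_mul_of_nonneg_left hEngζh hη0
            linarith
    -- conclude by the ε-argument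
    rw [hΔh]
    have hη1' : (0:ℝ) < η + 1 := by linarith
    refine le_of_forall_pos_le_add ?_
    intro ε hε
    obtain ⟨T, hT, hTl⟩ := Real.lt_sInf_add_pos (hne x xt)
      (show 0 < ε / (η + 1) by positivity)
    have h1 := hmain T hT
    have h2 : η * T ≤ η * (sInf (Eng '' CC (φ xt) (φ x)) + ε / (η + 1)) :=
      mul_le_mul_of_nonneg_left hTl.le hη0
    have h3 : η * (ε / (η + 1)) ≤ ε := by
      rw [mul_div_assoc', div_le_iff₀ hη1']
      nlinarith
    nlinarith [h1, h2, h3]
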